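/- Define g_p(x) = x^p and g_p^tr(A) = tr(A^p) on n×n Hermitian matrices, and let L be the Ornstein–Uhlenbeck generator on M_n^{sa}(ℂ). Then for p ≥ 2: L g_p^tr(A) = p·Σ_{k=0}^{p−2} tr(A^k)·tr(A^{p−2−k}) − p·tr(A^p). -/

import Mathlib

/-!
Along a direction `B`, the second derivative of `s ↦ tr((A + sB)^p)` at `0` is
`p Σ_k tr(B A^(p-2-k) B A^k)`. An orthonormal basis `(H i)` of the Hermitian matrices for
`⟨X, Y⟩ = tr(XY)` is also one of all complex matrices for the bilinear form `tr(XY)`,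
which yields the completeness relation `Σ_i H_i X H_i = tr(X) • 1`; summing the second
derivatives over `B = H i` therefore gives `p Σ_k tr(A^(p-2-k)) tr(A^k)`.
The drift term is `⟨A, p A^(p-1)⟩ = p tr(A^p)`.
-/

open Matrix

-- Any norm inducing the product topology would do; this one makes matrices a normed algebra.
attribute [local instance] Matrix.linftyOpNormedRing Matrix.linftyOpNormedAlgebra

section Calculus

variable {m : Type*} [Fintype m] [DecidableEq m]

theorem HasDerivAt.matrix_trace {f : ℝ → Matrix m m ℂ} {f' : Matrix m m ℂ} {x : ℝ}
    (h : HasDerivAt f f' x) : HasDerivAt (fun t => (f t).trace) f'.trace x :=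
  ((traceLinearMap m ℂ ℂ).restrictScalars ℝ).toContinuousLinearMap.hasFDerivAt
    |>.comp_hasDerivAt x h

theorem HasDerivAt.matrix_trace_pow {f : ℝ → Matrix m m ℂ} {f' : Matrix m m ℂ} {x : ℝ}
    (h : HasDerivAt f f' x) (k : ℕ) :
    HasDerivAt (fun t => (f t ^ k).trace) (k * (f x ^ (k - 1) * f').trace) x := by
  refine (h.fun_pow' k).matrix_trace.congr_deriv ?_
  have hcyclic : ∀ i ∈ Finset.range k,
      (f x ^ (k.pred - i) * f' * f x ^ i).trace = (f x ^ (k - 1) * f').trace := by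
    intro i hi
    rw [trace_mul_cycle, ← pow_add, Nat.pred_eq_sub_one,
      Nat.add_sub_cancel' (Nat.le_sub_one_of_lt (Finset.mem_range.mp hi))]
  rw [trace_sum, Finset.sum_congr rfl hcyclic, Finset.sum_const, Finset.card_range, nsmul_eq_mul]

theorem iteratedDeriv_two_trace_pow_add_smul (A B : Matrix m m ℂ) (p : ℕ) :
    iteratedDeriv 2 (fun s : ℝ => ((A + s • B) ^ p).trace) 0
      = p * ∑ k ∈ Finset.range (p - 1), (B * A ^ (p - 2 - k) * B * A ^ k).trace := by
  have hline : ∀ s : ℝ, HasDerivAt (fun t : ℝ => A + t • B) B s := fun s =>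
    (((hasDerivAt_id s).smul_const B).const_add A).congr_deriv (one_smul ℝ B)
  have hderiv : deriv (fun s : ℝ => ((A + s • B) ^ p).trace)
      = fun s => p * ((A + s • B) ^ (p - 1) * B).trace :=
    funext fun s => ((hline s).matrix_trace_pow p).deriv
  rw [iteratedDeriv_succ, iteratedDeriv_one, hderiv,
    ((((hline 0).fun_pow' (p - 1)).mul_const B).matrix_trace.const_mul (p : ℂ)).deriv,
    zero_smul, add_zero, Finset.sum_mul, trace_sum, Nat.pred_eq_sub_one, Nat.sub_sub,
    one_add_one_eq_two]
  refine congrArg _ (Finset.sum_congr rfl fun k _ => ?_)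
  rw [trace_mul_comm]
  simp only [mul_assoc]

end Calculus

section ResolutionOfIdentity

variable {m ι : Type*} [Fintype m] [DecidableEq m] [Fintype ι] {H : ι → Matrix m m ℂ}

theorem sum_trace_mul_smul_eq_self [DecidableEq ι]
    (horth : ∀ i j, (H i * H j).trace = if i = j then 1 else 0)
    (hspan : ∀ M : Matrix m m ℂ, M.IsHermitian → M ∈ Submodule.span ℝ (Set.range H))
    (M : Matrix m m ℂ) : ∑ i, (H i * M).trace • H i = M := by
  -- `Φ` is `ℂ`-linear and fixes the Hermitian matrices, which span everything over `ℂ`.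
  let Φ : Matrix m m ℂ →ₗ[ℂ] Matrix m m ℂ :=
    ∑ i, ((traceLinearMap m ℂ ℂ).comp (LinearMap.mulLeft ℂ (H i))).smulRight (H i)
  have hΦ : ∀ M, Φ M = ∑ i, (H i * M).trace • H i := fun M => by simp [Φ]
  have hbasis : Set.EqOn (Φ.restrictScalars ℝ) (LinearMap.id (R := ℝ)) (Set.range H) := by
    rintro _ ⟨j, rfl⟩
    simp [hΦ, horth, ite_smul]
  have hselfAdjoint : ∀ M : selfAdjoint (Matrix m m ℂ), Φ M = M := fun M =>
    LinearMap.eqOn_span' hbasis (hspan M (isHermitian_iff_isSelfAdjoint.mpr M.2))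
  rw [← hΦ, ← realPart_add_I_smul_imaginaryPart M, map_add, map_smul, hselfAdjoint, hselfAdjoint]

theorem sum_apply_mul_apply_eq_single
    (hH : ∀ M : Matrix m m ℂ, ∑ i, (H i * M).trace • H i = M) (a b c d : m) :
    ∑ i, H i a b * H i c d = single b a (1 : ℂ) c d := by
  conv_rhs => rw [← hH (single b a 1)]
  simp [trace_mul_single, Matrix.sum_apply]

theorem sum_mul_mul_eq_trace_smul_one
    (hH : ∀ M : Matrix m m ℂ, ∑ i, (H i * M).trace • H i = M) (X : Matrix m m ℂ) :
    ∑ i, H i * X * H i = X.trace • (1 : Matrix m m ℂ) := by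
  ext a d
  have hentry : ∀ i, (H i * X * H i) a d = ∑ b, ∑ c, X b c * (H i a b * H i c d) := fun i => by
    simp only [mul_apply, Finset.sum_mul]
    rw [Finset.sum_comm]
    exact Finset.sum_congr rfl fun b _ => Finset.sum_congr rfl fun c _ => by ring
  calc (∑ i, H i * X * H i) a d
      = ∑ b, ∑ c, X b c * ∑ i, H i a b * H i c d := by
        simp only [Matrix.sum_apply, hentry, Finset.mul_sum]
        rw [Finset.sum_comm]
        exact Finset.sum_congr rfl fun b _ => Finset.sum_comm
    _ = (X.trace • (1 : Matrix m m ℂ)) a d := by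
        simp [sum_apply_mul_apply_eq_single hH, single_apply, trace, one_apply, ite_and]

theorem sum_trace_mul_mul_mul
    (hH : ∀ M : Matrix m m ℂ, ∑ i, (H i * M).trace • H i = M) (X Y : Matrix m m ℂ) :
    ∑ i, (H i * X * H i * Y).trace = X.trace * Y.trace := by
  rw [← trace_sum, ← Finset.sum_mul, sum_mul_mul_eq_trace_smul_one hH, smul_mul_assoc, one_mul,
    trace_smul, smul_eq_mul]

end ResolutionOfIdentity

theorem OU_generator_trace_pow_general (n p : ℕ) {ι : Type*} [Fintype ι] [DecidableEq ι]
    (H : ι → Matrix (Fin n) (Fin n) ℂ)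
    (horth : ∀ i j, (H i * H j).trace = if i = j then 1 else 0)
    (hspan : ∀ M : Matrix (Fin n) (Fin n) ℂ, M.IsHermitian →
      M ∈ Submodule.span ℝ (Set.range H))
    (A : Matrix (Fin n) (Fin n) ℂ) :
    (∑ i, iteratedDeriv 2 (fun s : ℝ => ((A + s • H i) ^ p).trace) 0)
        - (A * ((p : ℂ) • A ^ (p - 1))).trace
      = (p : ℂ) * (∑ k ∈ Finset.range (p - 1), (A ^ k).trace * (A ^ (p - 2 - k)).trace)
        - (p : ℂ) * (A ^ p).trace := by
  have hH := sum_trace_mul_smul_eq_self horth hspan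
  have hlaplacian : ∑ i, iteratedDeriv 2 (fun s : ℝ => ((A + s • H i) ^ p).trace) 0
      = p * ∑ k ∈ Finset.range (p - 1), (A ^ k).trace * (A ^ (p - 2 - k)).trace := by
    simp only [iteratedDeriv_two_trace_pow_add_smul, ← Finset.mul_sum]
    rw [Finset.sum_comm]
    refine congrArg _ (Finset.sum_congr rfl fun k _ => ?_)
    rw [sum_trace_mul_mul_mul hH, mul_comm]
  have hdrift : (A * ((p : ℂ) • A ^ (p - 1))).trace = p * (A ^ p).trace := by
    rcases p with _ | p <;> simp [pow_succ']
  rw [hlaplacian, hdrift]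

/-- The Ornstein--Uhlenbeck generator `Lf(A) = Δf(A) - ⟨A, ∇f(A)⟩` applied to
`g_p^tr(A) = tr(A^p)` on the Euclidean space of `n × n` Hermitian matrices (with inner
product `⟨A,B⟩ = tr(AB)`): since `∇ g_p^tr(A) = p A^{p-1}` and the Laplacian is the sum
of second derivatives along any orthonormal basis `(H i)`, one has for `p ≥ 2`
`L g_p^tr(A) = p Σ_{k=0}^{p-2} tr(A^k) tr(A^{p-2-k}) - p tr(A^p)`. -/
theorem OU_generator_trace_pow (n p : ℕ) (hp : 2 ≤ p) {ι : Type*} [Fintype ι] [DecidableEq ι]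
    (H : ι → Matrix (Fin n) (Fin n) ℂ)
    (hherm : ∀ i, (H i).IsHermitian)
    (horth : ∀ i j, (H i * H j).trace = if i = j then 1 else 0)
    (hspan : ∀ M : Matrix (Fin n) (Fin n) ℂ, M.IsHermitian →
      M ∈ Submodule.span ℝ (Set.range H))
    (A : Matrix (Fin n) (Fin n) ℂ) (hA : A.IsHermitian) :
    (∑ i, iteratedDeriv 2 (fun s : ℝ => ((A + s • H i) ^ p).trace) 0)
        - (A * ((p : ℂ) • A ^ (p - 1))).trace
      = (p : ℂ) * (∑ k ∈ Finset.range (p - 1), (A ^ k).trace * (A ^ (p - 2 - k)).trace)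
        - (p : ℂ) * (A ^ p).trace :=
  OU_generator_trace_pow_general n p H horth hspan A
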